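/- Let T be a symbol/check tree, let x be a symbol node of T, and let z be a check-rooted symbol/check subtree whose erasure probability satisfies ε_z < 1. Let T' be the tree obtained from T by adding z as an additional check-node child of x. Assume that in T: (i) every symbol node on the path from x to the root of T (including x) has positive erasure probability, and (ii) for every check node c on the path from x to the root, every symbol-node child of c not lying on that path has erasure probability strictly less than 1. Then the erasure probability of the root of T' is strictly less than the erasure probability of the root of T. Consequently, since the recovery error probability of a punctured root symbol over the binary erasure channel equals half its erasure probability, attaching the survived check node z strictly decreases the recovery error probability of the root. -/
import Mathlib


/-- A symbol/check tree node: a symbol node carries an initial erasure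
probability `eps0` and a (possibly empty) list of check-node children;
a check node carries a list of symbol-node children. -/
inductive SCTree : Type where
  | sym (eps0 : ℝ) (children : List SCTree) : SCTree
  | chk (children : List SCTree) : SCTree

mutual
/-- Erasure probability of a node: `ε_v = ε⁰_v * ∏_c ε_c` for a symbol node,
`ε_c = 1 - ∏_w (1 - ε_w)` for a check node. -/
def SCTree.eps : SCTree → ℝ
  | .sym e cs => e * SCTree.prodEps cs
  | .chk ss => 1 - SCTree.prodOneSubEps ss

/-- `∏_c ε_c` over a list of nodes. -/
def SCTree.prodEps : List SCTree → ℝ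
  | [] => 1
  | t :: ts => t.eps * SCTree.prodEps ts

/-- `∏_w (1 - ε_w)` over a list of nodes. -/
def SCTree.prodOneSubEps : List SCTree → ℝ
  | [] => 1
  | t :: ts => (1 - t.eps) * SCTree.prodOneSubEps ts
end

mutual
/-- Well-formed symbol-rooted symbol/check tree: the root is a symbol node,
its initial erasure probability lies in `[0,1]`, and all children are
well-formed check-rooted trees. -/
inductive SCTree.WFSym : SCTree → Prop where
  | mk (e : ℝ) (cs : List SCTree) : 0 ≤ e → e ≤ 1 →
      (∀ c ∈ cs, SCTree.WFChk c) → SCTree.WFSym (.sym e cs)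

/-- Well-formed check-rooted symbol/check tree: the root is a check node with
a nonempty list of well-formed symbol-rooted children. -/
inductive SCTree.WFChk : SCTree → Prop where
  | mk (ss : List SCTree) : ss ≠ [] →
      (∀ s ∈ ss, SCTree.WFSym s) → SCTree.WFChk (.chk ss)
end

/-- `SCTree.GraftAt z T T'` : the tree `T'` is obtained from the tree `T` by
adding `z` as an additional check-node child of some symbol node `x` of `T`,
where moreover the following conditions on the path from `x` to the root of
`T` hold:
(i) every symbol node on the path (including `x` itself) has positive
    erasure probability (hypothesis `0 < SCTree.eps …` in `here`/`sym`), and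
(ii) for every check node on the path, every symbol-node child of it not
    lying on the path has erasure probability strictly less than `1`
    (hypothesis `∀ t ∈ l ++ r, t.eps < 1` in `chk`). -/
inductive SCTree.GraftAt (z : SCTree) : SCTree → SCTree → Prop where
  | here (e : ℝ) (cs : List SCTree) :
      0 < (SCTree.sym e cs).eps →
      SCTree.GraftAt z (.sym e cs) (.sym e (z :: cs))
  | sym (e : ℝ) (l r : List SCTree) (c c' : SCTree) :
      0 < (SCTree.sym e (l ++ c :: r)).eps →
      SCTree.GraftAt z c c' →
      SCTree.GraftAt z (.sym e (l ++ c :: r)) (.sym e (l ++ c' :: r))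
  | chk (l r : List SCTree) (s s' : SCTree) :
      (∀ t ∈ l ++ r, t.eps < 1) →
      SCTree.GraftAt z s s' →
      SCTree.GraftAt z (.chk (l ++ s :: r)) (.chk (l ++ s' :: r))

lemma SCTree.prodEps_append (l r : List SCTree) :
    SCTree.prodEps (l ++ r) = SCTree.prodEps l * SCTree.prodEps r := by
  induction l with
  | nil => simp [SCTree.prodEps]
  | cons t ts ih => simp [SCTree.prodEps, ih]; ring

lemma SCTree.prodOneSubEps_append (l r : List SCTree) :
    SCTree.prodOneSubEps (l ++ r)
      = SCTree.prodOneSubEps l * SCTree.prodOneSubEps r := by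
  induction l with
  | nil => simp [SCTree.prodOneSubEps]
  | cons t ts ih => simp [SCTree.prodOneSubEps, ih]; ring

mutual
theorem SCTree.wfSym_eps_bounds : ∀ t : SCTree, t.WFSym → 0 ≤ t.eps ∧ t.eps ≤ 1
  | .sym e cs, h => by
    cases h with
    | mk e cs h0 h1 hcs =>
      have hp := SCTree.prodEps_bounds cs hcs
      constructor
      · exact mul_nonneg h0 hp.1
      · calc e * SCTree.prodEps cs ≤ 1 * 1 :=
            mul_le_mul h1 hp.2 hp.1 zero_le_one
          _ = 1 := by ring

theorem SCTree.wfChk_eps_bounds : ∀ t : SCTree, t.WFChk → 0 ≤ t.eps ∧ t.eps ≤ 1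
  | .chk ss, h => by
    cases h with
    | mk ss hne hss =>
      have hp := SCTree.prodOneSubEps_bounds ss hss
      constructor
      · simp only [SCTree.eps]; linarith [hp.2]
      · simp only [SCTree.eps]; linarith [hp.1]

theorem SCTree.prodEps_bounds : ∀ ts : List SCTree, (∀ t ∈ ts, t.WFChk) →
    0 ≤ SCTree.prodEps ts ∧ SCTree.prodEps ts ≤ 1
  | [], _ => by simp [SCTree.prodEps]
  | t :: ts, h => by
    have ht := SCTree.wfChk_eps_bounds t (h t (by simp))
    have hts := SCTree.prodEps_bounds ts (fun s hs => h s (by simp [hs]))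
    constructor
    · exact mul_nonneg ht.1 hts.1
    · calc t.eps * SCTree.prodEps ts ≤ 1 * 1 :=
          mul_le_mul ht.2 hts.2 hts.1 zero_le_one
        _ = 1 := by ring

theorem SCTree.prodOneSubEps_bounds : ∀ ts : List SCTree, (∀ t ∈ ts, t.WFSym) →
    0 ≤ SCTree.prodOneSubEps ts ∧ SCTree.prodOneSubEps ts ≤ 1
  | [], _ => by simp [SCTree.prodOneSubEps]
  | t :: ts, h => by
    have ht := SCTree.wfSym_eps_bounds t (h t (by simp))
    have hts := SCTree.prodOneSubEps_bounds ts (fun s hs => h s (by simp [hs]))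
    constructor
    · exact mul_nonneg (by linarith [ht.2]) hts.1
    · calc (1 - t.eps) * SCTree.prodOneSubEps ts ≤ 1 * 1 :=
          mul_le_mul (by linarith [ht.1]) hts.2 hts.1 zero_le_one
        _ = 1 := by ring
end

lemma SCTree.prodOneSubEps_pos (ts : List SCTree) (h : ∀ t ∈ ts, t.eps < 1) :
    0 < SCTree.prodOneSubEps ts := by
  induction ts with
  | nil => simp [SCTree.prodOneSubEps]
  | cons t ts ih =>
      have h1 : (0:ℝ) < 1 - t.eps := by
        have := h t (by simp); linarith
      exact mul_pos h1 (ih (fun s hs => h s (by simp [hs])))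

lemma SCTree.graft_key {z : SCTree} (hz1 : z.eps < 1) :
    ∀ {T T' : SCTree}, SCTree.GraftAt z T T' → (T.WFSym ∨ T.WFChk) →
      T'.eps < T.eps := by
  intro T T' hg
  induction hg with
  | here e cs hpos =>
    intro _
    simp only [SCTree.eps, SCTree.prodEps] at *
    calc e * (z.eps * SCTree.prodEps cs) = z.eps * (e * SCTree.prodEps cs) := by
          ring
      _ < 1 * (e * SCTree.prodEps cs) := by
          exact mul_lt_mul_of_pos_right hz1 hpos
      _ = e * SCTree.prodEps cs := by ring
  | sym e l r c c' hpos _ ih =>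
    intro hwf
    have hwfS : SCTree.WFSym (.sym e (l ++ c :: r)) := by
      rcases hwf with h | h
      · exact h
      · cases h
    have hcwf : c.WFChk := by
      cases hwfS with
      | mk e cs h0 h1 hcs => exact hcs c (by simp)
    have hlt : c'.eps < c.eps := ih (Or.inr hcwf)
    have hc0 : 0 ≤ c.eps := (SCTree.wfChk_eps_bounds c hcwf).1
    simp only [SCTree.eps, SCTree.prodEps_append, SCTree.prodEps] at *
    set K := e * SCTree.prodEps l * SCTree.prodEps r with hK
    have hold : e * (SCTree.prodEps l * (c.eps * SCTree.prodEps r))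
        = K * c.eps := by rw [hK]; ring
    have hnew : e * (SCTree.prodEps l * (c'.eps * SCTree.prodEps r))
        = K * c'.eps := by rw [hK]; ring
    rw [hold] at hpos ⊢
    rw [hnew]
    have hKpos : 0 < K := by
      rcases lt_or_ge 0 K with h | h
      · exact h
      · exfalso
        have : K * c.eps ≤ 0 := mul_nonpos_of_nonpos_of_nonneg h hc0
        linarith
    exact mul_lt_mul_of_pos_left hlt hKpos
  | chk l r s s' hlr _ ih =>
    intro hwf
    have hwfC : SCTree.WFChk (.chk (l ++ s :: r)) := by
      rcases hwf with h | h
      · cases h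
      · exact h
    have hswf : s.WFSym := by
      cases hwfC with
      | mk ss hne hss => exact hss s (by simp)
    have hlt : s'.eps < s.eps := ih (Or.inl hswf)
    have hP : 0 < SCTree.prodOneSubEps l * SCTree.prodOneSubEps r := by
      have hl := SCTree.prodOneSubEps_pos l (fun t ht => hlr t (by simp [ht]))
      have hr := SCTree.prodOneSubEps_pos r (fun t ht => hlr t (by simp [ht]))
      exact mul_pos hl hr
    simp only [SCTree.eps, SCTree.prodOneSubEps_append, SCTree.prodOneSubEps]
    nlinarith

/-- **Theorem 1 (BEC): attaching a survived check node strictly decreases the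
root erasure probability, hence the recovery error probability.**
Let `T` be a well-formed symbol/check tree, `x` a symbol node of `T`, and `z`
a well-formed check-rooted symbol/check subtree with erasure probability
`ε_z < 1` (a survived check node).  Let `T'` be obtained from `T` by adding
`z` as an additional check-node child of `x` (relation `SCTree.GraftAt`,
which also encodes the path conditions (i) and (ii)).  Then the erasure
probability of the root of `T'` is strictly smaller than that of `T`, and
consequently — since the recovery error probability of a punctured root
symbol over the BEC equals half its erasure probability — the recovery error
probability `P_e = ε/2` strictly decreases. -/
theorem graft_survived_check_strict_decrease (z T T' : SCTree)
    (hT : T.WFSym) (hz : z.WFChk) (hz1 : z.eps < 1)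
    (hgraft : SCTree.GraftAt z T T') :
    T'.eps < T.eps ∧ T'.eps / 2 < T.eps / 2 := by
  have h := SCTree.graft_key hz1 hgraft (Or.inl hT)
  exact ⟨h, by linarith⟩
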